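/- A state ρ on ℂ² ⊗ ℂ² satisfies ⟨u⊗u| ρ |u⊗u⟩ = 0 for every unit vector u ∈ ℂ² if and only if ρ = |ψ⁻⟩⟨ψ⁻|. In other words, the singlet is the unique two-qubit state with the property that performing the same von Neumann measurement on each qubit always yields different outcomes, for every von Neumann measurement. -/

import Mathlib

open scoped Kronecker ComplexOrder
open Matrix

/-! The singlet is antisymmetric under the swap of the two qubits, so it is orthogonal to every
`u ⊗ u`; this gives one direction. Conversely, a positive semidefinite `ρ` with
`⟨v|ρ|v⟩ = 0` annihilates `v`, and the vectors `u ⊗ u` for `u = |0⟩, |1⟩, (|0⟩ + |1⟩)/√2`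
span the symmetric subspace. Being Hermitian, `ρ` is then supported on its orthogonal
complement, the singlet line, and unit trace fixes the multiple. -/

/-- The trace norm (Schatten 1-norm) of a complex matrix: `Tr √(Xᴴ X)`. -/
noncomputable def traceNorm {n : Type*} [Fintype n] [DecidableEq n] (X : Matrix n n ℂ) : ℝ :=
  (((Matrix.isHermitian_conjTranspose_mul_self X).eigenvectorUnitary : Matrix n n ℂ) *
      Matrix.diagonal (fun i => ((Real.sqrt
        ((Matrix.isHermitian_conjTranspose_mul_self X).eigenvalues i) : ℝ) : ℂ)) *
      (star (Matrix.isHermitian_conjTranspose_mul_self X).eigenvectorUnitary :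
        Matrix n n ℂ)).trace.re

/-- A quantum state: a positive semidefinite matrix with unit trace. -/
def IsState {n : Type*} [Fintype n] (ρ : Matrix n n ℂ) : Prop :=
  ρ.PosSemidef ∧ ρ.trace = 1

/-- The outer product `|v⟩⟨v|`. -/
def outer {n : Type*} (v : n → ℂ) : Matrix n n ℂ :=
  Matrix.of fun i j => v i * star (v j)

/-- A unit vector. -/
def IsUnitVec {n : Type*} [Fintype n] (v : n → ℂ) : Prop :=
  ∑ i, star (v i) * v i = 1

/-- A bipartite separable state: a finite convex combination of tensor products of states. -/
def SeparableState {a b : Type*} [Fintype a] [Fintype b]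
    (σ : Matrix (a × b) (a × b) ℂ) : Prop :=
  ∃ (m : ℕ) (p : Fin m → ℝ) (σA : Fin m → Matrix a a ℂ) (σB : Fin m → Matrix b b ℂ),
    (∀ y, 0 ≤ p y) ∧ (∑ y, p y = 1) ∧ (∀ y, IsState (σA y)) ∧ (∀ y, IsState (σB y)) ∧
    σ = ∑ y, (p y : ℂ) • (σA y ⊗ₖ σB y)

/-- A maximally entangled unit vector `(1/√d) Σ_k |e_k⟩ ⊗ |f_k⟩` built from two
orthonormal bases `e`, `f` of `ℂ^d`. -/
def MaxEntangled {d : ℕ} (φ : Fin d × Fin d → ℂ) : Prop :=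
  ∃ e f : Fin d → Fin d → ℂ,
    (∀ i j, ∑ x, star (e i x) * e j x = if i = j then (1 : ℂ) else 0) ∧
    (∀ i j, ∑ x, star (f i x) * f j x = if i = j then (1 : ℂ) else 0) ∧
    ∀ x, φ x = ((Real.sqrt d : ℂ))⁻¹ * ∑ k, e k x.1 * f k x.2

/-- The singlet `|ψ⁻⟩ = (|0⟩⊗|1⟩ − |1⟩⊗|0⟩)/√2` in `ℂ² ⊗ ℂ²`. -/
noncomputable def singlet : Fin 2 × Fin 2 → ℂ := fun x =>
  if x = ((0 : Fin 2), (1 : Fin 2)) then ((Real.sqrt 2 : ℂ))⁻¹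
  else if x = ((1 : Fin 2), (0 : Fin 2)) then -((Real.sqrt 2 : ℂ))⁻¹
  else 0

lemma inv_sqrt_two_mul_self : ((Real.sqrt 2 : ℂ))⁻¹ * ((Real.sqrt 2 : ℂ))⁻¹ = 1 / 2 := by
  rw [← mul_inv, ← Complex.ofReal_mul, Real.mul_self_sqrt zero_le_two]; norm_num

lemma outer_eq_vecMulVec {n : Type*} (v : n → ℂ) : outer v = vecMulVec v (star v) := rfl

lemma isUnitVec_single {n : Type*} [Fintype n] [DecidableEq n] (i : n) :
    IsUnitVec (Pi.single i (1 : ℂ)) := by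
  simp [IsUnitVec, Pi.single_apply]

lemma isUnitVec_const_inv_sqrt_two : IsUnitVec (fun _ : Fin 2 => ((Real.sqrt 2 : ℂ))⁻¹) := by
  simp only [IsUnitVec, Fin.sum_univ_two, star_inv₀, Complex.star_def, Complex.conj_ofReal,
    inv_sqrt_two_mul_self]
  norm_num

lemma tensor_self_single {n : Type*} [DecidableEq n] (i : n) :
    (fun x : n × n => (Pi.single i 1 : n → ℂ) x.1 * (Pi.single i 1 : n → ℂ) x.2) =
      (Pi.single (i, i) 1 : n × n → ℂ) := by
  ext ⟨j, k⟩
  by_cases hj : j = i <;> by_cases hk : k = i <;> simp [hj, hk]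

lemma dotProduct_tensor_self_eq_zero_of_antisymm {n : Type*} [Fintype n] {φ : n × n → ℂ}
    (hφ : ∀ a b, φ (b, a) = -φ (a, b)) (u : n → ℂ) :
    φ ⬝ᵥ (fun x : n × n => u x.1 * u x.2) = 0 := by
  refine self_eq_neg.mp ?_
  calc φ ⬝ᵥ (fun x : n × n => u x.1 * u x.2)
      = ∑ x : n × n, φ x.swap * (u x.swap.1 * u x.swap.2) :=
        (Fintype.sum_equiv (Equiv.prodComm n n) _ _ fun _ => rfl).symm
    _ = ∑ x : n × n, -(φ x * (u x.1 * u x.2)) := by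
        congr! 1 with ⟨a, b⟩
        rw [Prod.swap_prod_mk, hφ]
        ring
    _ = -(φ ⬝ᵥ (fun x : n × n => u x.1 * u x.2)) := Finset.sum_neg_distrib _

lemma star_singlet_swap (a b : Fin 2) : star singlet (b, a) = -star singlet (a, b) := by
  fin_cases a <;> fin_cases b <;> simp [singlet]

lemma outer_singlet_mulVec_tensor_self (u : Fin 2 → ℂ) :
    outer singlet *ᵥ (fun x : Fin 2 × Fin 2 => u x.1 * u x.2) = 0 := by
  rw [outer_eq_vecMulVec, vecMulVec_mulVec,
    dotProduct_tensor_self_eq_zero_of_antisymm star_singlet_swap, MulOpposite.op_zero, zero_smul]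

lemma vanishing_columns_of_mulVec_tensor_self_eq_zero
    {ρ : Matrix (Fin 2 × Fin 2) (Fin 2 × Fin 2) ℂ}
    (h : ∀ u : Fin 2 → ℂ, IsUnitVec u → ρ *ᵥ (fun x : Fin 2 × Fin 2 => u x.1 * u x.2) = 0) :
    (∀ x, ρ x (0, 0) = 0) ∧ (∀ x, ρ x (1, 1) = 0) ∧ ∀ x, ρ x (0, 1) + ρ x (1, 0) = 0 := by
  have hcol (i : Fin 2) (x) : ρ x (i, i) = 0 := by
    simpa [tensor_self_single, mulVec_single_one] using
      congrFun (h _ (isUnitVec_single i)) x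
  refine ⟨hcol 0, hcol 1, fun x => ?_⟩
  have hsum := congrFun (h _ isUnitVec_const_inv_sqrt_two) x
  simp only [mulVec, dotProduct, Fintype.sum_prod_type, Fin.sum_univ_two, inv_sqrt_two_mul_self,
    hcol, Pi.zero_apply] at hsum
  linear_combination 2 * hsum

lemma Matrix.IsHermitian.eq_trace_smul_outer_singlet
    {ρ : Matrix (Fin 2 × Fin 2) (Fin 2 × Fin 2) ℂ} (hρ : ρ.IsHermitian)
    (h00 : ∀ x, ρ x (0, 0) = 0) (h11 : ∀ x, ρ x (1, 1) = 0)
    (hsym : ∀ x, ρ x (0, 1) + ρ x (1, 0) = 0) : ρ = ρ.trace • outer singlet := by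
  have hH (x y) : star (ρ y x) = ρ x y := hρ.apply x y
  have r00 (y) : ρ (0, 0) y = 0 := by rw [← hH, h00, star_zero]
  have r11 (y) : ρ (1, 1) y = 0 := by rw [← hH, h11, star_zero]
  generalize e0101 : ρ (0, 1) (0, 1) = a
  have ha : star a = a := e0101 ▸ hH _ _
  have e0110 : ρ (0, 1) (1, 0) = -a := by linear_combination hsym (0, 1) - e0101
  have e1001 : ρ (1, 0) (0, 1) = -a := by rw [← hH, e0110, star_neg, ha]
  have e1010 : ρ (1, 0) (1, 0) = a := by linear_combination hsym (1, 0) - e1001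
  have htr : ρ.trace = a * 2 := by
    simp [trace, Fintype.sum_prod_type, h00, h11, e0101, e1010, mul_two]
  ext ⟨i, j⟩ ⟨k, l⟩
  fin_cases i <;> fin_cases j <;> fin_cases k <;> fin_cases l <;>
    simp [htr, outer, singlet, h00, h11, r00, r11, e0101, e0110, e1001, e1010,
      inv_sqrt_two_mul_self]

/-- A two-qubit state `ρ` satisfies `⟨u⊗u|ρ|u⊗u⟩ = 0` for every unit
vector `u ∈ ℂ²` if and only if `ρ = |ψ⁻⟩⟨ψ⁻|`: the singlet is the unique two-qubit
state for which the same von Neumann measurement on each qubit always yields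
different outcomes. -/
theorem stmt4 (ρ : Matrix (Fin 2 × Fin 2) (Fin 2 × Fin 2) ℂ) (hρ : IsState ρ) :
    (∀ u : Fin 2 → ℂ, IsUnitVec u →
      star (fun x : Fin 2 × Fin 2 => u x.1 * u x.2) ⬝ᵥ
        ρ *ᵥ (fun x : Fin 2 × Fin 2 => u x.1 * u x.2) = 0) ↔
    ρ = outer singlet := by
  obtain ⟨hpsd, htr⟩ := hρ
  constructor
  · intro h
    obtain ⟨h00, h11, hsym⟩ := vanishing_columns_of_mulVec_tensor_self_eq_zero fun u hu =>
      (hpsd.dotProduct_mulVec_zero_iff _).mp (h u hu)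
    rw [hpsd.1.eq_trace_smul_outer_singlet h00 h11 hsym, htr, one_smul]
  · rintro rfl u -
    rw [outer_singlet_mulVec_tensor_self, dotProduct_zero]
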